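/- Let J be a topological abelian group containing a finite-index subgroup M isomorphic to Z_p^n, and let d be a positive integer. Then the quotient J/dJ is finite, and #(J/dJ) = #(M/dM) · #J[d] / #M[d], where J[d] denotes the d-torsion subgroup. In particular, if p does not divide d then #(J/dJ) = #J[d], and if d = p then #(J/dJ) = p^n · #J[d]. -/

import Mathlib

/-- Multiplication by `d` as an additive group homomorphism. -/
def mulByHom (A : Type*) [AddCommGroup A] (d : ℕ) : A →+ A where
  toFun x := d • x
  map_zero' := smul_zero d
  map_add' x y := smul_add d x y

/-- The `d`-torsion subgroup `A[d]` of an abelian group `A`. -/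
def dTorsion (A : Type*) [AddCommGroup A] (d : ℕ) : AddSubgroup A := (mulByHom A d).ker

/-- The quotient `A/dA` of an abelian group `A`. -/
abbrev modD (A : Type*) [AddCommGroup A] (d : ℕ) := A ⧸ (mulByHom A d).range

/-! Multiplication by `d` on `0 → M → J → J/M → 0` and the snake lemma give
`[J : dJ] = [M : dM] · [J[d] : M[d]]` for every subgroup `M` of finite index; in terms of indices
this is `AddSubgroup.index_map` for `x ↦ d • x` combined with two tower laws. For `M ≅ ℤ_pⁿ`,
`M` is torsion-free and `ℤ_p/dℤ_p ≅ ℤ/p^{v_p(d)}`, since `d` is `p^{v_p(d)}` times a `p`-adic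
unit. -/

open AddSubgroup

theorem mem_dTorsion {A : Type*} [AddCommGroup A] {d : ℕ} {x : A} :
    x ∈ dTorsion A d ↔ d • x = 0 := Iff.rfl

theorem mem_range_mulByHom {A : Type*} [AddCommGroup A] {d : ℕ} {x : A} :
    x ∈ (mulByHom A d).range ↔ ∃ y, d • y = x := Iff.rfl

theorem AddSubgroup.index_range_eq_relIndex_map_mul_relIndex_ker {G : Type*} [AddCommGroup G]
    (f : G →+ G) {H : AddSubgroup G} (hH : H.index ≠ 0) (hf : H.map f ≤ H) :
    f.range.index = (H.map f).relIndex H * H.relIndex f.ker := by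
  have key := H.index_map f
  rw [← relIndex_mul_index hf, ← relIndex_mul_index (le_sup_left : H ≤ H ⊔ f.ker),
    relIndex_sup_left, ← mul_assoc, mul_comm _ (H ⊔ f.ker).index] at key
  have hsup : (H ⊔ f.ker).index ≠ 0 := fun h0 => hH (by
    rw [← relIndex_mul_index (le_sup_left : H ≤ H ⊔ f.ker), h0, mul_zero])
  exact (mul_left_cancel₀ hsup key).symm

theorem AddSubgroup.card_addSubgroupOf_mul_relIndex {G : Type*} [AddGroup G]
    (H K : AddSubgroup G) : Nat.card (K.addSubgroupOf H) * H.relIndex K = Nat.card K := by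
  have h := relIndex_inf_mul_relIndex (⊥ : AddSubgroup G) H K
  rw [bot_inf_eq, relIndex_bot_left, relIndex_bot_left] at h
  rw [← h, ← inf_addSubgroupOf_left,
    Nat.card_congr (addSubgroupOfEquivOfLe inf_le_left).toEquiv]

section
variable {J : Type*} [AddCommGroup J] (M : AddSubgroup J) (d : ℕ)

theorem dTorsion_eq_addSubgroupOf : dTorsion M d = (dTorsion J d).addSubgroupOf M := by
  ext x
  simp only [mem_dTorsion, mem_addSubgroupOf, ← coe_nsmul, ZeroMemClass.coe_eq_zero]

theorem map_mulByHom_addSubgroupOf :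
    (M.map (mulByHom J d)).addSubgroupOf M = (mulByHom M d).range := by
  ext x
  simp only [mem_addSubgroupOf, mem_map, mem_range_mulByHom]
  constructor
  · rintro ⟨y, hy, hyx⟩
    exact ⟨⟨y, hy⟩, Subtype.ext hyx⟩
  · rintro ⟨y, rfl⟩
    exact ⟨y, y.2, rfl⟩

theorem card_modD_eq_mul_relIndex (hM : M.index ≠ 0) :
    Nat.card (modD J d) = Nat.card (modD M d) * M.relIndex (dTorsion J d) := by
  have hmap : M.map (mulByHom J d) ≤ M := by
    rintro _ ⟨x, hx, rfl⟩
    exact M.nsmul_mem hx d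
  rw [← index_eq_card, index_range_eq_relIndex_map_mul_relIndex_ker _ hM hmap, relIndex,
    map_mulByHom_addSubgroupOf, index_eq_card]
  rfl

theorem card_modD_mul_card_dTorsion (hM : M.index ≠ 0) :
    Nat.card (modD J d) * Nat.card (dTorsion M d) =
      Nat.card (modD M d) * Nat.card (dTorsion J d) := by
  rw [card_modD_eq_mul_relIndex M d hM, dTorsion_eq_addSubgroupOf, mul_assoc,
    mul_comm (relIndex _ _), card_addSubgroupOf_mul_relIndex]

theorem finite_modD_of_index_ne_zero (hM : M.index ≠ 0) [Finite (modD M d)] :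
    Finite (modD J d) := by
  refine Nat.finite_of_card_ne_zero ?_
  rw [card_modD_eq_mul_relIndex M d hM]
  exact mul_ne_zero Nat.card_pos.ne' fun h0 => hM (Nat.eq_zero_of_zero_dvd
    (h0 ▸ relIndex_dvd_index_of_normal M (dTorsion J d)))

end

theorem dTorsion_eq_bot {A : Type*} [AddCommGroup A] [IsAddTorsionFree A] {d : ℕ} (hd : d ≠ 0) :
    dTorsion A d = ⊥ :=
  (eq_bot_iff_forall _).2 fun _ hx => (nsmul_eq_zero_iff_right hd).1 hx

theorem range_mulByHom_map_addEquiv {A B : Type*} [AddCommGroup A] [AddCommGroup B]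
    (e : A ≃+ B) (d : ℕ) :
    (mulByHom A d).range.map (e : A →+ B) = (mulByHom B d).range := by
  ext y
  simp only [mem_map, mem_range_mulByHom]
  constructor
  · rintro ⟨_, ⟨x, rfl⟩, rfl⟩
    exact ⟨e x, (map_nsmul e d x).symm⟩
  · rintro ⟨x, rfl⟩
    exact ⟨d • e.symm x, ⟨e.symm x, rfl⟩, by simp⟩

theorem card_modD_congr {A B : Type*} [AddCommGroup A] [AddCommGroup B] (e : A ≃+ B) (d : ℕ) :
    Nat.card (modD A d) = Nat.card (modD B d) := by
  rw [← index_eq_card, ← index_eq_card, ← range_mulByHom_map_addEquiv e, index_map_equiv]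

theorem range_mulByHom_pi {ι A : Type*} [AddCommGroup A] (d : ℕ) :
    (mulByHom (ι → A) d).range = pi Set.univ fun _ => (mulByHom A d).range := by
  ext x
  simp only [mem_range_mulByHom, mem_pi, Set.mem_univ, true_implies]
  constructor
  · rintro ⟨y, rfl⟩ i
    exact ⟨y i, rfl⟩
  · intro h
    choose y hy using h
    exact ⟨y, funext hy⟩

theorem card_modD_pi {ι A : Type*} [Fintype ι] [AddCommGroup A] (d : ℕ) :
    Nat.card (modD (ι → A) d) = Nat.card (modD A d) ^ Fintype.card ι := by
  rw [← index_eq_card, range_mulByHom_pi, index_pi, Finset.prod_const, Finset.card_univ,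
    index_eq_card]

namespace PadicInt
variable {p : ℕ} [hp : Fact p.Prime]

theorem associated_pow_factorization_natCast {d : ℕ} (hd : d ≠ 0) :
    Associated ((p : ℤ_[p]) ^ d.factorization p) (d : ℤ_[p]) := by
  have hu : IsUnit ((d / p ^ d.factorization p : ℕ) : ℤ_[p]) :=
    isUnit_iff.2 (norm_natCast_eq_one_iff.2 (Nat.coprime_ordCompl hp.out hd))
  convert associated_mul_unit_right _ _ hu
  rw [← Nat.cast_pow, ← Nat.cast_mul, Nat.ordProj_mul_ordCompl_eq_self]

theorem range_mulByHom_eq_ker_toZModPow {d : ℕ} (hd : d ≠ 0) :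
    (mulByHom ℤ_[p] d).range = (toZModPow (p := p) (d.factorization p)).toAddMonoidHom.ker := by
  ext x
  rw [mem_range_mulByHom, AddMonoidHom.mem_ker, RingHom.toAddMonoidHom_eq_coe,
    AddMonoidHom.coe_coe, ← RingHom.mem_ker, ker_toZModPow, Ideal.mem_span_singleton,
    (associated_pow_factorization_natCast hd).dvd_iff_dvd_left]
  simp only [nsmul_eq_mul, Dvd.dvd, eq_comm]

theorem card_modD {d : ℕ} (hd : d ≠ 0) : Nat.card (modD ℤ_[p] d) = p ^ d.factorization p := by
  rw [← index_eq_card, range_mulByHom_eq_ker_toZModPow hd, index_ker,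
    AddMonoidHom.range_eq_top_of_surjective _ (ZMod.ringHom_surjective _), card_top,
    Nat.card_zmod]

end PadicInt

/-- Let `J` be an abelian group containing a subgroup `M` of finite index with `M ≅ ℤ_pⁿ`, and
let `d ≥ 1`.  Then `J/dJ` is finite and `#(J/dJ)·#M[d] = #(M/dM)·#J[d]`.  In particular, if
`p ∤ d` then `#(J/dJ) = #J[d]`, and if `d = p` then `#(J/dJ) = pⁿ·#J[d]`. -/
theorem card_quotient_dJ (p n d : ℕ) [Fact p.Prime] (hd : 1 ≤ d)
    (J : Type*) [AddCommGroup J] (M : AddSubgroup J)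
    (hM : M.index ≠ 0) (e : M ≃+ (Fin n → ℤ_[p])) :
    Finite (modD J d) ∧
    Nat.card (modD J d) * Nat.card (dTorsion M d) =
      Nat.card (modD M d) * Nat.card (dTorsion J d) ∧
    (¬ p ∣ d → Nat.card (modD J d) = Nat.card (dTorsion J d)) ∧
    (d = p → Nat.card (modD J d) = p ^ n * Nat.card (dTorsion J d)) := by
  have hd₀ : d ≠ 0 := by omega
  have hcard_modD_M : Nat.card (modD M d) = p ^ (d.factorization p * n) := by
    rw [card_modD_congr e, card_modD_pi, PadicInt.card_modD hd₀, Fintype.card_fin, ← pow_mul]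
  have : IsAddTorsionFree M := e.injective.isAddTorsionFree (e : M →+ Fin n → ℤ_[p])
  have hcard_dTorsion_M : Nat.card (dTorsion M d) = 1 := by
    rw [dTorsion_eq_bot hd₀, card_bot]
  have : Finite (modD M d) :=
    Nat.finite_of_card_ne_zero (hcard_modD_M ▸ pow_ne_zero _ (Fact.out : p.Prime).ne_zero)
  have hcard := card_modD_mul_card_dTorsion M d hM
  rw [hcard_dTorsion_M, mul_one, hcard_modD_M] at hcard
  refine ⟨finite_modD_of_index_ne_zero M d hM, card_modD_mul_card_dTorsion M d hM,
    fun hpd => ?_, fun hdp => ?_⟩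
  · rw [hcard, Nat.factorization_eq_zero_of_not_dvd hpd, zero_mul, pow_zero, one_mul]
  · subst hdp
    rw [hcard, Nat.Prime.factorization_self Fact.out, one_mul]
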